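/- Let F be a frequency alphabet with |F| = M, let X = {X_0, …, X_{L−1}} be an (N,M,L)-FHS set over F and Y = {Y_0, …, Y_{L'−1}} an (N',M,L')-FHS set over F with NL = N'L'.ertSuppose there is a bijection π from {0,…,L'−1} × Z_{N'} onto {0,…,L−1} × Z_N such that Y_j(s) = X_{π(j,s)_1}(π(j,s)_2) for all j, s. Then S_a(X) + S_c(X) = S_a(Y) + S_c(Y). Moreover, if N, N', L, L' ≥ 2, then X has optimal AHC if and only if Y has optimal AHC. -/

import Mathlib

open Finset

/-- Periodic Hamming correlation of two FHSs `X, Y : ZMod N → F` at shift `τ`. -/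
def Hcorr {N : ℕ} [NeZero N] {F : Type*} [DecidableEq F]
    (X Y : ZMod N → F) (τ : ZMod N) : ℕ :=
  (Finset.univ.filter (fun t => X t = Y (t + τ))).card

/-- `N_X(a)`: number of occurrences of frequency `a` in the FHS `X`. -/
def countFreq {N : ℕ} [NeZero N] {F : Type*} [DecidableEq F]
    (X : ZMod N → F) (a : F) : ℕ :=
  (Finset.univ.filter (fun t => X t = a)).card

/-- `N_U(a)`: total number of occurrences of `a` in the FHS set `U`. -/
def countFreqSet {N L : ℕ} [NeZero N] {F : Type*} [DecidableEq F]
    (U : Fin L → ZMod N → F) (a : F) : ℕ :=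
  ∑ i : Fin L, countFreq (U i) a

/-- `S_a(U)`: sum of all out-of-phase Hamming autocorrelation values. -/
def Sa {N L : ℕ} [NeZero N] {F : Type*} [DecidableEq F]
    (U : Fin L → ZMod N → F) : ℕ :=
  ∑ i : Fin L, ∑ τ ∈ Finset.univ \ {(0 : ZMod N)}, Hcorr (U i) (U i) τ

/-- `S_c(U)`: sum of all Hamming crosscorrelation values (ordered pairs `i ≠ j`). -/
def Sc {N L : ℕ} [NeZero N] {F : Type*} [DecidableEq F]
    (U : Fin L → ZMod N → F) : ℕ :=
  ∑ i : Fin L, ∑ j ∈ Finset.univ \ {i}, ∑ τ : ZMod N, Hcorr (U i) (U j) τ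

/-- Average Hamming autocorrelation `A_a(U) = S_a(U)/(L(N-1))`. -/
def Aa {N L : ℕ} [NeZero N] {F : Type*} [DecidableEq F]
    (U : Fin L → ZMod N → F) : ℚ :=
  (Sa U : ℚ) / ((L : ℚ) * ((N : ℚ) - 1))

/-- Average Hamming crosscorrelation `A_c(U) = S_c(U)/(L(L-1)N)`. -/
def Ac {N L : ℕ} [NeZero N] {F : Type*} [DecidableEq F]
    (U : Fin L → ZMod N → F) : ℚ :=
  (Sc U : ℚ) / ((L : ℚ) * ((L : ℚ) - 1) * (N : ℚ))

/-- `H_a(U)`: maximum out-of-phase Hamming autocorrelation of the set `U`. -/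
def Ha {N L : ℕ} [NeZero N] {F : Type*} [DecidableEq F]
    (U : Fin L → ZMod N → F) : ℕ :=
  Finset.univ.sup fun i => (Finset.univ \ {(0 : ZMod N)}).sup fun τ => Hcorr (U i) (U i) τ

/-- `H_c(U)`: maximum Hamming crosscorrelation of the set `U`. -/
def Hc {N L : ℕ} [NeZero N] {F : Type*} [DecidableEq F]
    (U : Fin L → ZMod N → F) : ℕ :=
  Finset.univ.sup fun i => (Finset.univ \ {i}).sup fun j =>
    Finset.univ.sup fun τ => Hcorr (U i) (U j) τ

/-- `U` has optimal average Hamming correlation (meets the Peng et al. AHC bound with equality). -/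
def optimalAHC {N L : ℕ} [NeZero N] {F : Type*} [Fintype F] [DecidableEq F]
    (U : Fin L → ZMod N → F) : Prop :=
  Aa U / ((N : ℚ) * ((L : ℚ) - 1)) + Ac U / ((N : ℚ) - 1)
    = ((N : ℚ) * L - Fintype.card F) /
      ((Fintype.card F : ℚ) * ((N : ℚ) - 1) * ((L : ℚ) - 1))

/-- The cyclotomic class `C_r = {α^(Ml+r) : 0 ≤ l ≤ f-1}`. -/
def cycClass {F : Type*} [Monoid F] [DecidableEq F] (α : F) (M f r : ℕ) : Finset F :=
  (Finset.range f).image fun l => α ^ (M * l + r)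

/-- The cyclotomic number `(i,j)_M = |(C_i + 1) ∩ C_j|`. -/
def cycNum {F : Type*} [Field F] [DecidableEq F] (α : F) (M f i j : ℕ) : ℕ :=
  (((cycClass α M f i).image fun x => x + 1) ∩ cycClass α M f j).card

/-!
Each pair of positions (of `U i` and of `U j`) carrying the same frequency is counted exactly once in
`∑ i, ∑ j, ∑ τ, Hcorr (U i) (U j) τ`, so `S_a(U) + S_c(U) + LN = ∑ a, N_U(a)²`. An interleaving
permutes the `LN = L'N'` positions, so it preserves every `N_U(a)` and hence `S_a + S_c`. Optimal AHC
amounts to `S_a + S_c = NL(NL - M)/M`, which depends on `N` and `L` only through `NL`.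
-/

section Correlation

variable {N L : ℕ} [NeZero N] {F : Type*} [DecidableEq F]

lemma Hcorr_self_zero (X : ZMod N → F) : Hcorr X X 0 = N := by
  simp [Hcorr, ZMod.card]

lemma sum_Hcorr_eq_sum_countFreq_mul [Fintype F] (X Y : ZMod N → F) :
    ∑ τ, Hcorr X Y τ = ∑ a, countFreq X a * countFreq Y a := by
  have hdelta : ∀ t s : ZMod N, (∑ a, (if X t = a then 1 else 0) * (if Y s = a then 1 else 0))
      = if X t = Y s then 1 else 0 := by
    intro t s
    simp [eq_comm]
  calc ∑ τ, Hcorr X Y τ = ∑ t, ∑ τ, if X t = Y (t + τ) then 1 else 0 := by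
        simp only [Hcorr, card_filter]
        exact sum_comm
    _ = ∑ t, ∑ s, if X t = Y s then 1 else 0 :=
        sum_congr rfl fun t _ => Fintype.sum_equiv (Equiv.addLeft t) _ _ fun _ => rfl
    _ = ∑ a, countFreq X a * countFreq Y a := by
        simp only [countFreq, card_filter, sum_mul_sum]
        symm
        rw [sum_comm]
        refine sum_congr rfl fun t _ => ?_
        rw [sum_comm]
        exact sum_congr rfl fun s _ => hdelta t s

lemma sum_sum_sum_Hcorr_eq_Sa_add_Sc (U : Fin L → ZMod N → F) :
    ∑ i, ∑ j, ∑ τ, Hcorr (U i) (U j) τ = Sa U + Sc U + L * N := by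
  have hrow : ∀ i, ∑ j, ∑ τ, Hcorr (U i) (U j) τ
      = ∑ τ ∈ univ \ {0}, Hcorr (U i) (U i) τ + ∑ j ∈ univ \ {i}, ∑ τ, Hcorr (U i) (U j) τ + N := by
    intro i
    rw [sum_eq_sum_sdiff_singleton_add (mem_univ i),
      sum_eq_sum_sdiff_singleton_add (mem_univ 0), Hcorr_self_zero]
    ring
  simp only [hrow, sum_add_distrib, Sa, Sc, sum_const, card_univ, Fintype.card_fin, smul_eq_mul]

lemma sum_sum_sum_Hcorr_eq_sum_sq [Fintype F] (U : Fin L → ZMod N → F) :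
    ∑ i, ∑ j, ∑ τ, Hcorr (U i) (U j) τ = ∑ a, countFreqSet U a ^ 2 := by
  simp only [sum_Hcorr_eq_sum_countFreq_mul, countFreqSet, sq, sum_mul_sum]
  symm
  rw [sum_comm]
  exact sum_congr rfl fun i _ => sum_comm

lemma Sa_add_Sc_add_mul_eq_sum_sq [Fintype F] (U : Fin L → ZMod N → F) :
    Sa U + Sc U + L * N = ∑ a, countFreqSet U a ^ 2 := by
  rw [← sum_sum_sum_Hcorr_eq_Sa_add_Sc, sum_sum_sum_Hcorr_eq_sum_sq]

lemma countFreqSet_eq_card (U : Fin L → ZMod N → F) (a : F) :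
    countFreqSet U a = #{p : Fin L × ZMod N | U p.1 p.2 = a} := by
  rw [card_filter, Fintype.sum_prod_type]
  exact sum_congr rfl fun i _ => card_filter _ _

/-- `optimalAHC` rewritten as an equation that involves `N` and `L` only through `N * L`. -/
lemma optimalAHC_iff [Fintype F] (U : Fin L → ZMod N → F) (hN : 2 ≤ N) (hL : 2 ≤ L) :
    optimalAHC U ↔ (Sa U + Sc U : ℚ)
      = N * L * (N * L - Fintype.card F) / Fintype.card F := by
  have hN1 : (N : ℚ) - 1 ≠ 0 := sub_ne_zero.mpr (by exact_mod_cast (by omega : N ≠ 1))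
  have hL1 : (L : ℚ) - 1 ≠ 0 := sub_ne_zero.mpr (by exact_mod_cast (by omega : L ≠ 1))
  have hNL : (N : ℚ) * L ≠ 0 := by positivity
  set M : ℚ := (Fintype.card F : ℚ)
  set D : ℚ := N * L * (N - 1) * (L - 1)
  have hD : D ≠ 0 := by positivity
  have hlhs : Aa U / (N * (L - 1)) + Ac U / (N - 1) = (Sa U + Sc U : ℚ) / D := by
    rw [Aa, Ac]
    field_simp
    ring
  -- `M = 0` is allowed: both sides are then `0` by the convention `x / 0 = 0`
  have hrhs : (N * L - M) / (M * (N - 1) * (L - 1)) = N * L * (N * L - M) / M / D := by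
    rw [div_div, show M * D = N * L * (M * (N - 1) * (L - 1)) by ring,
      mul_div_mul_left _ _ hNL]
  rw [optimalAHC, hlhs, hrhs, div_left_inj' hD]

end Correlation

lemma countFreqSet_eq_of_equiv {N N' L L' : ℕ} [NeZero N] [NeZero N'] {F : Type*}
    [DecidableEq F] (X : Fin L → ZMod N → F) (Y : Fin L' → ZMod N' → F)
    (e : Fin L' × ZMod N' ≃ Fin L × ZMod N)
    (he : ∀ j s, Y j s = X (e (j, s)).1 (e (j, s)).2) (a : F) :
    countFreqSet Y a = countFreqSet X a := by
  rw [countFreqSet_eq_card, countFreqSet_eq_card]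
  exact card_equiv e fun p => by simp [he]

theorem interleaving_preserves_AHC_general (N N' L L' : ℕ) [NeZero N] [NeZero N']
    {F : Type*} [Fintype F] [DecidableEq F]
    (X : Fin L → ZMod N → F) (Y : Fin L' → ZMod N' → F)
    (hNL : N * L = N' * L')
    (e : Fin L' × ZMod N' ≃ Fin L × ZMod N)
    (he : ∀ (j : Fin L') (s : ZMod N'), Y j s = X (e (j, s)).1 (e (j, s)).2) :
    Sa X + Sc X = Sa Y + Sc Y ∧
    (2 ≤ N → 2 ≤ N' → 2 ≤ L → 2 ≤ L' → (optimalAHC X ↔ optimalAHC Y)) := by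
  have hX := Sa_add_Sc_add_mul_eq_sum_sq X
  have hY := Sa_add_Sc_add_mul_eq_sum_sq Y
  simp only [countFreqSet_eq_of_equiv X Y e he] at hY
  have hsum : Sa X + Sc X = Sa Y + Sc Y := by linarith
  refine ⟨hsum, fun hN hN' hL hL' => ?_⟩
  have hsumQ : (Sa X + Sc X : ℚ) = Sa Y + Sc Y := by exact_mod_cast hsum
  have hNLQ : (N : ℚ) * L = N' * L' := by exact_mod_cast hNL
  rw [optimalAHC_iff X hN hL, optimalAHC_iff Y hN' hL', hsumQ, hNLQ]

/-- Theorem 14, interleaving preserves the correlation sum and AHC optimality. -/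
theorem interleaving_preserves_AHC (N N' L L' M : ℕ) [NeZero N] [NeZero N']
    {F : Type*} [Fintype F] [DecidableEq F] (hM : Fintype.card F = M)
    (X : Fin L → ZMod N → F) (Y : Fin L' → ZMod N' → F)
    (hNL : N * L = N' * L')
    (e : Fin L' × ZMod N' ≃ Fin L × ZMod N)
    (he : ∀ (j : Fin L') (s : ZMod N'), Y j s = X (e (j, s)).1 (e (j, s)).2) :
    Sa X + Sc X = Sa Y + Sc Y ∧
    (2 ≤ N → 2 ≤ N' → 2 ≤ L → 2 ≤ L' → (optimalAHC X ↔ optimalAHC Y)) :=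
  interleaving_preserves_AHC_general N N' L L' X Y hNL e he
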